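/- Fix R > 0 and a smooth function τ : ℝ³ → ℝ with 0 ≤ τ ≤ 1, τ(x) = 1 for |x| ≤ R and τ(x) = 0 for |x| ≥ 2R, and for ε > 0 set U_ε := τ·u_ε where u_ε(x) = 3^{1/4}·ε^{1/2}·(ε² + |x|²)^{−1/2}. Then there exist constants C > 0 and ε₀ ∈ (0,1) such that for all ε ∈ (0, ε₀), | ∫_{ℝ³} U_ε(x)²·log(U_ε(x)²) dx | ≤ C·ε·log(1/ε), where the integrand t² log(t²) is interpreted as 0 at t = 0. -/

import Mathlib

open MeasureTheory

/-- The Aubin–Talenti bubble `u_ε(x) = 3^{1/4} ε^{1/2} (ε² + |x|²)^{-1/2}` on `ℝ³`. -/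
noncomputable def bubble (ε : ℝ) : EuclideanSpace ℝ (Fin 3) → ℝ :=
  fun x => (3 : ℝ) ^ ((1 : ℝ) / 4) * ε ^ ((1 : ℝ) / 2) * (ε ^ 2 + ‖x‖ ^ 2) ^ (-(1 : ℝ) / 2)

/-- `y ^ (-2 : ℝ)` as a real power equals `(y ^ 2)⁻¹`. -/
lemma rpow_neg_two_eq (y : ℝ) (hy : 0 ≤ y) : y ^ (-(2:ℝ)) = (y ^ 2)⁻¹ := by
  rw [show (-(2:ℝ)) = -((2:ℕ):ℝ) by norm_num, Real.rpow_neg hy, Real.rpow_natCast]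

/-- Elementary inequality: for `0 ≤ a ≤ b` one has `|a log a| ≤ b (1 + |log b|)`. -/
lemma aux_log (a b : ℝ) (ha : 0 ≤ a) (hab : a ≤ b) :
    |a * Real.log a| ≤ b * (1 + |Real.log b|) := by
  rcases ha.eq_or_lt with h | h
  · rw [← h]
    simp only [zero_mul, abs_zero]
    have hb : 0 ≤ b := le_trans ha hab
    positivity
  · have hb : 0 < b := lt_of_lt_of_le h hab
    have hba : 0 < b / a := by positivity
    have h1 : Real.log (b / a) ≤ b / a - 1 := Real.log_le_sub_one_of_pos hba
    have h2 : 0 ≤ Real.log (b / a) := Real.log_nonneg ((le_div_iff₀ h).mpr (by linarith))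
    have h3 : Real.log a = Real.log b - Real.log (b / a) := by
      rw [Real.log_div hb.ne' h.ne']; ring
    have h4 : |Real.log a| ≤ |Real.log b| + Real.log (b / a) := by
      rw [h3]
      calc |Real.log b - Real.log (b / a)| ≤ |Real.log b| + |Real.log (b / a)| := abs_sub _ _
        _ = |Real.log b| + Real.log (b / a) := by rw [abs_of_nonneg h2]
    have h5 : a * Real.log (b / a) ≤ b := by
      have h6 := mul_le_mul_of_nonneg_left h1 h.le
      have h7 : a * (b / a - 1) = b - a := by field_simp
      nlinarith
    calc |a * Real.log a| = a * |Real.log a| := by rw [abs_mul, abs_of_nonneg h.le]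
      _ ≤ a * (|Real.log b| + Real.log (b / a)) := by
          exact mul_le_mul_of_nonneg_left h4 h.le
      _ = a * |Real.log b| + a * Real.log (b / a) := by ring
      _ ≤ b * |Real.log b| + b := by
          have := mul_le_mul_of_nonneg_right hab (abs_nonneg (Real.log b))
          linarith
      _ = b * (1 + |Real.log b|) := by ring

/-- Integrability of `‖x‖ ^ (-2)` on a ball in `ℝ³`, proved via dyadic annuli. -/
lemma integrableOn_inv_norm_sq (ρ : ℝ) (hρ : 0 < ρ) :
    IntegrableOn (fun x : EuclideanSpace ℝ (Fin 3) => ‖x‖ ^ (-(2:ℝ)))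
      (Metric.ball (0 : EuclideanSpace ℝ (Fin 3)) ρ) volume := by
  set E := EuclideanSpace ℝ (Fin 3)
  set f : E → ℝ := fun x => ‖x‖ ^ (-(2:ℝ)) with hf
  set s : ℕ → Set E := fun n =>
    Metric.closedBall (0 : E) (ρ / 2 ^ n) \ Metric.ball (0 : E) (ρ / 2 ^ (n + 1)) with hs
  have hfinrank : Module.finrank ℝ E = 3 := by
    simp [E, finrank_euclideanSpace]
  have hrpos : ∀ n : ℕ, (0:ℝ) < ρ / 2 ^ n := fun n => by positivity
  have hmeas : ∀ n, MeasurableSet (s n) := fun n =>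
    measurableSet_closedBall.diff Metric.isOpen_ball.measurableSet
  have hnorm : ∀ n, ∀ x ∈ s n, ρ / 2 ^ (n + 1) ≤ ‖x‖ ∧ ‖x‖ ≤ ρ / 2 ^ n := by
    intro n x hx
    obtain ⟨h1, h2⟩ := hx
    rw [Metric.mem_closedBall, dist_zero_right] at h1
    rw [Metric.mem_ball, dist_zero_right, not_lt] at h2
    exact ⟨h2, h1⟩
  have hcont : ∀ n, IntegrableOn f (s n) volume := by
    intro n
    apply ContinuousOn.integrableOn_compact
      ((isCompact_closedBall _ _).diff Metric.isOpen_ball)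
    intro x hx
    have hxn : ‖x‖ ≠ 0 := by
      have h1 := (hnorm n x hx).1
      have h2 : 0 < ‖x‖ := lt_of_lt_of_le (hrpos (n+1)) h1
      exact h2.ne'
    exact ((Real.continuousAt_rpow_const _ _ (Or.inl hxn)).comp
      continuous_norm.continuousAt).continuousWithinAt
  have hbound : ∀ n, ∀ x ∈ s n, f x ≤ (ρ / 2 ^ (n + 1)) ^ (-(2:ℝ)) := by
    intro n x hx
    exact Real.rpow_le_rpow_of_nonpos (hrpos (n+1)) (hnorm n x hx).1 (by norm_num)
  set v : ℝ := (volume (Metric.ball (0 : E) 1)).toReal with hv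
  have hv0 : 0 ≤ v := ENNReal.toReal_nonneg
  have hvol : ∀ n, (volume (s n)).toReal ≤ (ρ / 2 ^ n) ^ 3 * v := by
    intro n
    have h1 : volume (s n) ≤ volume (Metric.closedBall (0 : E) (ρ / 2 ^ n)) :=
      measure_mono Set.diff_subset
    have h2 : volume (Metric.closedBall (0 : E) (ρ / 2 ^ n))
        = ENNReal.ofReal ((ρ / 2 ^ n) ^ 3) * volume (Metric.ball (0 : E) 1) := by
      rw [Measure.addHaar_closedBall _ _ (hrpos n).le, hfinrank]
    calc (volume (s n)).toReal ≤ (volume (Metric.closedBall (0 : E) (ρ / 2 ^ n))).toReal := by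
          apply ENNReal.toReal_mono _ h1
          exact (measure_closedBall_lt_top).ne
      _ = (ρ / 2 ^ n) ^ 3 * v := by
          rw [h2, ENNReal.toReal_mul, ENNReal.toReal_ofReal (by positivity)]
  have hterm : ∀ n : ℕ, (∫ x in s n, ‖f x‖) ≤ (4 * ρ * v) * (1/2) ^ n := by
    intro n
    have hfin : volume (s n) < ⊤ :=
      lt_of_le_of_lt (measure_mono Set.diff_subset) measure_closedBall_lt_top
    have h1 : (∫ x in s n, ‖f x‖) ≤ (∫ _x in s n, (ρ / 2 ^ (n + 1)) ^ (-(2:ℝ))) := by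
      apply setIntegral_mono_on (hcont n).norm (integrableOn_const hfin.ne) (hmeas n)
      intro x hx
      have h0 : 0 ≤ f x := Real.rpow_nonneg (norm_nonneg _) _
      rw [Real.norm_eq_abs, abs_of_nonneg h0]
      exact hbound n x hx
    have h2 : (∫ _x in s n, (ρ / 2 ^ (n + 1)) ^ (-(2:ℝ)))
        = (volume (s n)).toReal * (ρ / 2 ^ (n + 1)) ^ (-(2:ℝ)) := by
      rw [setIntegral_const]; rfl
    have h3 : (ρ / 2 ^ (n + 1)) ^ (-(2:ℝ)) = ((ρ / 2 ^ (n + 1)) ^ 2)⁻¹ :=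
      rpow_neg_two_eq _ (hrpos (n+1)).le
    have h4 : (volume (s n)).toReal * (ρ / 2 ^ (n + 1)) ^ (-(2:ℝ))
        ≤ ((ρ / 2 ^ n) ^ 3 * v) * ((ρ / 2 ^ (n + 1)) ^ 2)⁻¹ := by
      rw [h3]
      apply mul_le_mul_of_nonneg_right (hvol n) (by positivity)
    have h5 : ((ρ / 2 ^ n) ^ 3 * v) * ((ρ / 2 ^ (n + 1)) ^ 2)⁻¹ = (4 * ρ * v) * (1/2) ^ n := by
      have h2n : ((2:ℝ)) ^ n ≠ 0 := by positivity
      field_simp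
      rw [one_div_pow]
      field_simp
      ring
    calc (∫ x in s n, ‖f x‖) ≤ _ := h1
      _ = _ := h2
      _ ≤ _ := h4
      _ = _ := h5
  have hsum : Summable fun n : ℕ => (∫ x in s n, ‖f x‖) := by
    apply Summable.of_nonneg_of_le
      (fun n => setIntegral_nonneg (hmeas n) (fun x _ => norm_nonneg _)) hterm
    exact (summable_geometric_two).mul_left _
  have hunion : IntegrableOn f (⋃ n, s n) volume :=
    integrableOn_iUnion_of_summable_integral_norm hcont hsum
  have hcover : Metric.ball (0 : E) ρ \ {0} ⊆ ⋃ n, s n := by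
    intro x hx
    obtain ⟨hx1, hx2⟩ := hx
    rw [Metric.mem_ball, dist_zero_right] at hx1
    have hx0 : 0 < ‖x‖ := by
      simp only [Set.mem_singleton_iff] at hx2
      exact norm_pos_iff.mpr hx2
    have hex : ∃ n : ℕ, ρ / 2 ^ (n + 1) ≤ ‖x‖ := by
      obtain ⟨n, hn⟩ := pow_unbounded_of_one_lt (ρ / ‖x‖) (by norm_num : (1:ℝ) < 2)
      refine ⟨n, ?_⟩
      rw [div_le_iff₀ (by positivity)]
      rw [div_lt_iff₀ hx0] at hn
      have hstep : (2:ℝ) ^ n * ‖x‖ ≤ ‖x‖ * 2 ^ (n + 1) := by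
        have h6 : (2:ℝ) ^ n ≤ 2 ^ (n + 1) := pow_le_pow_right₀ (by norm_num) (Nat.le_succ n)
        nlinarith
      linarith
    classical
    set m := Nat.find hex with hm
    have hm1 : ρ / 2 ^ (m + 1) ≤ ‖x‖ := Nat.find_spec hex
    have hm2 : ‖x‖ ≤ ρ / 2 ^ m := by
      rcases Nat.eq_zero_or_pos m with h | h
      · rw [h]; simpa using hx1.le
      · have h7 := Nat.find_min hex (show m - 1 < m from Nat.sub_lt h one_pos)
        rw [not_le] at h7
        have hms : m - 1 + 1 = m := Nat.succ_pred_eq_of_pos h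
        rw [hms] at h7
        exact h7.le
    refine Set.mem_iUnion.mpr ⟨m, ?_, ?_⟩
    · rw [Metric.mem_closedBall, dist_zero_right]; exact hm2
    · rw [Metric.mem_ball, dist_zero_right, not_lt]; exact hm1
  have h0 : (volume : Measure E) {(0 : E)} = 0 := measure_singleton _
  have hmain : IntegrableOn f (Metric.ball (0 : E) ρ \ {0}) volume := hunion.mono_set hcover
  exact hmain.congr_set_ae (diff_null_ae_eq_self h0).symm

set_option maxHeartbeats 1000000 in
theorem stmt15 (R : ℝ) (hR : 0 < R) (τ : EuclideanSpace ℝ (Fin 3) → ℝ)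
    (hτsmooth : ContDiff ℝ (⊤ : ℕ∞) τ) (hτ0 : ∀ x, 0 ≤ τ x) (hτ1 : ∀ x, τ x ≤ 1)
    (hτin : ∀ x : EuclideanSpace ℝ (Fin 3), ‖x‖ ≤ R → τ x = 1)
    (hτout : ∀ x : EuclideanSpace ℝ (Fin 3), 2 * R ≤ ‖x‖ → τ x = 0) :
    ∃ C ε₀ : ℝ, 0 < C ∧ 0 < ε₀ ∧ ε₀ < 1 ∧
      ∀ ε : ℝ, 0 < ε → ε < ε₀ →
        |∫ x : EuclideanSpace ℝ (Fin 3),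
            (τ x * bubble ε x) ^ 2 * Real.log ((τ x * bubble ε x) ^ 2)| ≤
          C * ε * Real.log (1 / ε) := by
  set S : ℝ := (3:ℝ) ^ ((1:ℝ)/2) with hSdef
  have hS0 : 0 < S := Real.rpow_pos_of_pos (by norm_num) _
  set A : ℝ := 1 + Real.log 3 + Real.log (1 + 4 * R ^ 2) with hAdef
  have hlog3 : 0 ≤ Real.log 3 := Real.log_nonneg (by norm_num)
  have hlogR : 0 ≤ Real.log (1 + 4 * R ^ 2) := Real.log_nonneg (by nlinarith)
  have hA1 : 1 ≤ A := by simp only [hAdef]; linarith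
  set c : ℝ :=
    ∫ x in Metric.ball (0 : EuclideanSpace ℝ (Fin 3)) (2 * R), ‖x‖ ^ (-(2:ℝ)) with hcdef
  have hc0 : 0 ≤ c :=
    setIntegral_nonneg Metric.isOpen_ball.measurableSet
      (fun x _ => Real.rpow_nonneg (norm_nonneg _) _)
  have hint : IntegrableOn (fun x : EuclideanSpace ℝ (Fin 3) => ‖x‖ ^ (-(2:ℝ)))
      (Metric.ball (0 : EuclideanSpace ℝ (Fin 3)) (2 * R)) volume :=
    integrableOn_inv_norm_sq (2 * R) (by linarith)
  refine ⟨4 * S * c + 1, Real.exp (-A), by positivity, Real.exp_pos _, ?_, ?_⟩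
  · rw [Real.exp_lt_one_iff]; linarith
  intro ε hε hεA
  set L : ℝ := Real.log (1 / ε) with hLdef
  have hLlog : L = -Real.log ε := by rw [hLdef, one_div, Real.log_inv]
  have hAL : A < L := by
    have h1 := Real.log_lt_log hε hεA
    rw [Real.log_exp] at h1
    rw [hLlog]; linarith
  have hL0 : 0 < L := by linarith
  have hε1 : ε < 1 := lt_trans hεA (by rw [Real.exp_lt_one_iff]; linarith)
  set K : ℝ := 4 * S * ε * L with hKdef
  have hK0 : 0 ≤ K := by positivity
  set g : EuclideanSpace ℝ (Fin 3) → ℝ :=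
    fun x => K * Set.indicator (Metric.ball (0 : EuclideanSpace ℝ (Fin 3)) (2 * R))
      (fun y => ‖y‖ ^ (-(2:ℝ))) x with hgdef
  have hgint : Integrable g volume :=
    (hint.integrable_indicator Metric.isOpen_ball.measurableSet).const_mul K
  set f : EuclideanSpace ℝ (Fin 3) → ℝ :=
    fun x => (τ x * bubble ε x) ^ 2 * Real.log ((τ x * bubble ε x) ^ 2) with hfdef
  have hae : ∀ᵐ x : EuclideanSpace ℝ (Fin 3) ∂volume, |f x| ≤ g x := by
    have h0 : ∀ᵐ x : EuclideanSpace ℝ (Fin 3) ∂volume, x ≠ 0 := by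
      rw [ae_iff]
      simpa using measure_singleton (0 : EuclideanSpace ℝ (Fin 3))
    filter_upwards [h0] with x hx0
    by_cases hx : x ∈ Metric.ball (0 : EuclideanSpace ℝ (Fin 3)) (2 * R)
    · -- main estimate inside the ball
      rw [Metric.mem_ball, dist_zero_right] at hx
      have hxn : 0 < ‖x‖ := norm_pos_iff.mpr hx0
      have hden : (0:ℝ) < ε ^ 2 + ‖x‖ ^ 2 := by positivity
      set b : ℝ := S * ε * (ε ^ 2 + ‖x‖ ^ 2)⁻¹ with hbdef
      have hb0 : 0 < b := by positivity
      have e1 : ((3:ℝ) ^ ((1:ℝ)/4)) ^ 2 = S := by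
        rw [hSdef, ← Real.rpow_natCast ((3:ℝ) ^ ((1:ℝ)/4)) 2,
          ← Real.rpow_mul (by norm_num : (0:ℝ) ≤ 3)]
        norm_num
      have e2 : (ε ^ ((1:ℝ)/2)) ^ 2 = ε := by
        rw [← Real.rpow_natCast (ε ^ ((1:ℝ)/2)) 2, ← Real.rpow_mul hε.le]
        norm_num
      have e3 : ((ε ^ 2 + ‖x‖ ^ 2) ^ (-(1:ℝ)/2)) ^ 2 = (ε ^ 2 + ‖x‖ ^ 2)⁻¹ := by
        rw [← Real.rpow_natCast ((ε ^ 2 + ‖x‖ ^ 2) ^ (-(1:ℝ)/2)) 2, ← Real.rpow_mul hden.le]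
        norm_num [Real.rpow_neg_one]
      have hsq : bubble ε x ^ 2 = b := by
        rw [bubble, hbdef, mul_pow, mul_pow, e1, e2, e3]
      have hab : (τ x * bubble ε x) ^ 2 ≤ b := by
        rw [mul_pow, ← hsq]
        have h1 : τ x ^ 2 ≤ 1 := by nlinarith [hτ0 x, hτ1 x]
        nlinarith [sq_nonneg (bubble ε x)]
      have hstep1 : |f x| ≤ b * (1 + |Real.log b|) :=
        aux_log _ b (sq_nonneg _) hab
      have hlogb : Real.log b = Real.log S + Real.log ε - Real.log (ε ^ 2 + ‖x‖ ^ 2) := by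
        rw [hbdef, Real.log_mul (by positivity) (by positivity),
          Real.log_mul hS0.ne' hε.ne', Real.log_inv]
        ring
      have hlogS : Real.log S = (1/2) * Real.log 3 := Real.log_rpow (by norm_num) _
      have hd1 : Real.log (ε ^ 2 + ‖x‖ ^ 2) ≤ Real.log (1 + 4 * R ^ 2) := by
        apply Real.log_le_log hden
        nlinarith
      have hd2 : -(2 * L) ≤ Real.log (ε ^ 2 + ‖x‖ ^ 2) := by
        have h1 : Real.log (ε ^ 2) ≤ Real.log (ε ^ 2 + ‖x‖ ^ 2) :=
          Real.log_le_log (by positivity) (by nlinarith)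
        rw [Real.log_pow] at h1
        rw [hLlog]
        push_cast at h1
        linarith
      have hlogε : Real.log ε = -L := by rw [hLlog]; ring
      have habs : |Real.log b| ≤ A - 1 + 3 * L := by
        rw [abs_le]
        constructor
        · rw [hlogb, hlogS, hlogε, hAdef]
          nlinarith [hlog3, hlogR, hL0, hd1]
        · rw [hlogb, hlogS, hlogε, hAdef]
          nlinarith [hlog3, hlogR, hL0, hd2]
      have hstep2 : b * (1 + |Real.log b|) ≤ b * (4 * L) := by
        apply mul_le_mul_of_nonneg_left _ hb0.le
        linarith
      have hbb : b ≤ S * ε * (‖x‖ ^ 2)⁻¹ := by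
        rw [hbdef]
        apply mul_le_mul_of_nonneg_left _ (by positivity)
        apply inv_anti₀ (by positivity)
        nlinarith
      have hrw : ‖x‖ ^ (-(2:ℝ)) = (‖x‖ ^ 2)⁻¹ := rpow_neg_two_eq _ (norm_nonneg _)
      have hgx : g x = K * ‖x‖ ^ (-(2:ℝ)) := by
        rw [hgdef]
        simp only
        rw [Set.indicator_of_mem (by rw [Metric.mem_ball, dist_zero_right]; exact hx)]
      calc |f x| ≤ b * (1 + |Real.log b|) := hstep1
        _ ≤ b * (4 * L) := hstep2
        _ ≤ (S * ε * (‖x‖ ^ 2)⁻¹) * (4 * L) := by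
            apply mul_le_mul_of_nonneg_right hbb (by positivity)
        _ = K * (‖x‖ ^ 2)⁻¹ := by rw [hKdef]; ring
        _ = g x := by rw [hgx, hrw]
    · -- outside the ball : τ = 0 and both sides vanish
      have hτx : τ x = 0 := by
        apply hτout
        rw [Metric.mem_ball, dist_zero_right, not_lt] at hx
        exact hx
      have hfx : f x = 0 := by
        rw [hfdef]; simp [hτx]
      have hgx : g x = 0 := by
        rw [hgdef]
        simp only
        rw [Set.indicator_of_notMem hx, mul_zero]
      rw [hfx, hgx]; simp
  have h1 : |∫ x : EuclideanSpace ℝ (Fin 3), f x| ≤ ∫ x : EuclideanSpace ℝ (Fin 3), |f x| := by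
    simpa [Real.norm_eq_abs] using norm_integral_le_integral_norm f
  have h2 : (∫ x : EuclideanSpace ℝ (Fin 3), |f x|) ≤ ∫ x : EuclideanSpace ℝ (Fin 3), g x :=
    integral_mono_of_nonneg (Filter.Eventually.of_forall fun x => abs_nonneg _) hgint hae
  have h3 : (∫ x : EuclideanSpace ℝ (Fin 3), g x) = K * c := by
    rw [hgdef]
    rw [MeasureTheory.integral_const_mul]
    rw [integral_indicator Metric.isOpen_ball.measurableSet]
  have h4 : K * c ≤ (4 * S * c + 1) * ε * L := by
    rw [hKdef]
    have h5 : 4 * S * ε * L * c = (4 * S * c) * (ε * L) := by ring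
    have h6 : (4 * S * c + 1) * ε * L = (4 * S * c + 1) * (ε * L) := by ring
    rw [h5, h6]
    apply mul_le_mul_of_nonneg_right (by linarith) (by positivity)
  calc |∫ x : EuclideanSpace ℝ (Fin 3), f x|
      ≤ ∫ x : EuclideanSpace ℝ (Fin 3), |f x| := h1
    _ ≤ ∫ x : EuclideanSpace ℝ (Fin 3), g x := h2
    _ = K * c := h3
    _ ≤ (4 * S * c + 1) * ε * L := h4
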